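/- arXiv:2308.07920 — 6 statements merged into one kernel-verified Lean document; each statement's English description precedes it below -/
import Mathlib

section
/- Let d ≥ 2 and m ≥ 1 be integers. Let C ⊆ B_m be a nonempty connected set with C ∩ ∂B_m ≠ ∅, and let S be a connected component of B_m ∖ C with S ∩ ∂B_m ≠ ∅. Then ∂_{B_m} S ∩ ∂B_m ≠ ∅, where ∂_{B_m} S = {x ∈ B_m ∖ S : ∃ y ∈ S with y ∼ x} is the relative boundary of S in B_m. -/
/-- Nearest-neighbor adjacency on `ℤ^d`: Euclidean distance one. -/
def nnAdj {d : ℕ} (x y : Fin d → ℤ) : Prop := ∑ i, (x i - y i) ^ 2 = 1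

/-- The box `B_m = ([-m,m] ∩ ℤ)^d`. -/
def latBox (d m : ℕ) : Set (Fin d → ℤ) := {x | ∀ i, |x i| ≤ (m : ℤ)}

/-- The inner boundary `∂B_m = {x ∈ B_m : |x|_∞ = m}`. -/
def latSphere (d m : ℕ) : Set (Fin d → ℤ) :=
  {x | (∀ i, |x i| ≤ (m : ℤ)) ∧ ∃ i, |x i| = (m : ℤ)}

/-- `x` and `y` are joined by a nearest-neighbor path lying in `A`. -/
def LatJoined {d : ℕ} (A : Set (Fin d → ℤ)) (x y : Fin d → ℤ) : Prop :=
  ∃ l : List (Fin d → ℤ), l.Chain' nnAdj ∧ l.head? = some x ∧ l.getLast? = some y ∧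
    ∀ z ∈ l, z ∈ A

/-- A set is connected if any two of its points are joined by a path inside it. -/
def LatConn {d : ℕ} (A : Set (Fin d → ℤ)) : Prop := ∀ x ∈ A, ∀ y ∈ A, LatJoined A x y

/-!
For `d ≥ 2` the sphere `∂B_m` is connected: from a point with `|x i| = m`, push every other
coordinate to `m` one unit step at a time while coordinate `i` keeps the point on the sphere,
then move coordinate `i` itself to `m`, now held on the sphere by any other coordinate.
A path in `∂B_m` from a point of `S` to a point of `C`, which lies outside `S`, must leave `S`
along some edge `y ∼ x`; its endpoint `x` is a point of the relative boundary on `∂B_m`.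
-/

open Function

section Lattice

variable {d m : ℕ}

lemma nnAdj_symm {x y : Fin d → ℤ} (h : nnAdj x y) : nnAdj y x := by
  unfold nnAdj at *
  rw [← h]
  exact Finset.sum_congr rfl fun i _ => by ring

lemma not_nnAdj_self (x : Fin d → ℤ) : ¬ nnAdj x x := by
  simp [nnAdj]

lemma nnAdj_update_succ (x : Fin d → ℤ) (i : Fin d) (a : ℤ) :
    nnAdj (update x i a) (update x i (a + 1)) := by
  unfold nnAdj
  rw [Finset.sum_eq_single i (fun j _ hj => by simp [update_of_ne hj]) (by simp)]
  simp

lemma update_mem_latBox {x : Fin d → ℤ} (hx : x ∈ latBox d m) (i : Fin d) {b : ℤ}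
    (hb : |b| ≤ m) : update x i b ∈ latBox d m := by
  intro j
  rcases eq_or_ne j i with rfl | hj
  · simpa using hb
  · simpa [update_of_ne hj] using hx j

lemma update_mem_latSphere {x : Fin d → ℤ} (hx : x ∈ latBox d m) {i j : Fin d} (hij : j ≠ i)
    (hxj : |x j| = m) {b : ℤ} (hb : |b| ≤ m) : update x i b ∈ latSphere d m :=
  ⟨update_mem_latBox hx i hb, j, by rwa [update_of_ne hij]⟩

def sphereGraph (d m : ℕ) : SimpleGraph (Fin d → ℤ) where
  Adj x y := nnAdj x y ∧ x ∈ latSphere d m ∧ y ∈ latSphere d m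
  symm := ⟨fun _ _ h => ⟨nnAdj_symm h.1, h.2.2, h.2.1⟩⟩
  loopless := ⟨fun x h => not_nnAdj_self x h.1⟩

lemma sphereGraph_reachable_update {x : Fin d → ℤ} (hx : x ∈ latBox d m) {i j : Fin d}
    (hij : j ≠ i) (hxj : |x j| = m) {a b : ℤ} (ha : |a| ≤ m) (hb : |b| ≤ m) :
    (sphereGraph d m).Reachable (update x i a) (update x i b) := by
  wlog hab : a ≤ b generalizing a b
  · exact (this hb ha (le_of_not_ge hab)).symm
  induction b, hab using Int.leInduction with
  | base => rfl
  | succ b hab ih =>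
    have hb' : |b| ≤ m :=
      abs_le.2 ⟨by linarith [(abs_le.1 ha).1], by linarith [(abs_le.1 hb).2]⟩
    exact (ih hb').trans <| SimpleGraph.Adj.reachable
      ⟨nnAdj_update_succ x i b, update_mem_latSphere hx hij hxj hb',
        update_mem_latSphere hx hij hxj hb⟩

lemma sphereGraph_reachable_update_self {x : Fin d → ℤ} (hx : x ∈ latBox d m) {i j : Fin d}
    (hij : j ≠ i) (hxj : |x j| = m) {b : ℤ} (hb : |b| ≤ m) :
    (sphereGraph d m).Reachable x (update x i b) := by
  simpa using sphereGraph_reachable_update hx hij hxj (hx i) hb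

lemma sphereGraph_reachable_piecewise {x : Fin d → ℤ} (hx : x ∈ latBox d m) {i : Fin d}
    (hxi : |x i| = m) (s : Finset (Fin d)) (his : i ∉ s) :
    (sphereGraph d m).Reachable x (s.piecewise (fun _ => (m : ℤ)) x) := by
  induction s using Finset.induction_on with
  | empty => simp
  | @insert k s _ ih =>
    have hik : i ≠ k := fun h => his (h ▸ Finset.mem_insert_self k s)
    have hy : s.piecewise (fun _ => (m : ℤ)) x ∈ latBox d m :=
      fun j => by by_cases hj : j ∈ s <;> simp [hj, hx j]
    rw [Finset.piecewise_insert]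
    refine (ih fun h => his (Finset.mem_insert_of_mem h)).trans ?_
    exact sphereGraph_reachable_update_self hy hik
      (by simpa [Finset.piecewise_eq_of_notMem _ _ _ fun h => his (Finset.mem_insert_of_mem h)])
      (by simp)

lemma sphereGraph_reachable_corner (hd : 2 ≤ d) {x : Fin d → ℤ} (hx : x ∈ latSphere d m) :
    (sphereGraph d m).Reachable x (fun _ => (m : ℤ)) := by
  obtain ⟨hxB, i, hxi⟩ := hx
  have : Nontrivial (Fin d) := Fin.nontrivial_iff_two_le.2 hd
  obtain ⟨j, hji⟩ := exists_ne i
  set y := (Finset.univ.erase i).piecewise (fun _ => (m : ℤ)) x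
  have hyj : y j = m := by simp [y, hji]
  have hyB : y ∈ latBox d m := fun k => by by_cases hk : k = i <;> simp [y, hk, hxB]
  have hcorner : update y i m = fun _ => (m : ℤ) := by
    funext k; by_cases hk : k = i <;> simp [y, hk]
  have hxy : (sphereGraph d m).Reachable x y :=
    sphereGraph_reachable_piecewise hxB hxi _ (Finset.notMem_erase i _)
  exact hxy.trans (hcorner ▸ sphereGraph_reachable_update_self hyB hji (by simp [hyj]) (by simp))

lemma sphereGraph_reachable (hd : 2 ≤ d) {x y : Fin d → ℤ} (hx : x ∈ latSphere d m)
    (hy : y ∈ latSphere d m) : (sphereGraph d m).Reachable x y :=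
  (sphereGraph_reachable_corner hd hx).trans (sphereGraph_reachable_corner hd hy).symm

end Lattice

theorem relative_boundary_meets_sphere_general (d m : ℕ) (hd : 2 ≤ d)
    (C S : Set (Fin d → ℤ))
    (hCbd : (C ∩ latSphere d m).Nonempty)
    (hSsub : S ⊆ latBox d m \ C)
    (hSbd : (S ∩ latSphere d m).Nonempty) :
    ({x ∈ latBox d m \ S | ∃ y ∈ S, nnAdj y x} ∩ latSphere d m).Nonempty := by
  obtain ⟨s, hsS, hs⟩ := hSbd
  obtain ⟨c, hcC, hc⟩ := hCbd
  have hcS : c ∉ S := fun h => (hSsub h).2 hcC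
  obtain ⟨walk⟩ := sphereGraph_reachable hd hs hc
  obtain ⟨e, -, hfstS, hsndS⟩ := walk.exists_boundary_dart S hsS hcS
  obtain ⟨hadj, -, hsnd⟩ := e.adj
  exact ⟨e.snd, ⟨⟨hsnd.1, hsndS⟩, e.fst, hfstS, hadj⟩, hsnd⟩

/-- if `C ⊆ B_m` is nonempty, connected and meets `∂B_m`, and `S` is a
connected component of `B_m \ C` meeting `∂B_m`, then the relative boundary
`∂_{B_m} S` meets `∂B_m`. -/
theorem relative_boundary_meets_sphere (d m : ℕ) (hd : 2 ≤ d) (hm : 1 ≤ m)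
    (C S : Set (Fin d → ℤ))
    (hCsub : C ⊆ latBox d m) (hCne : C.Nonempty) (hCconn : LatConn C)
    (hCbd : (C ∩ latSphere d m).Nonempty)
    (hSsub : S ⊆ latBox d m \ C) (hSne : S.Nonempty) (hSconn : LatConn S)
    (hSmax : ∀ S' : Set (Fin d → ℤ), S ⊆ S' → S' ⊆ latBox d m \ C → LatConn S' → S' = S)
    (hSbd : (S ∩ latSphere d m).Nonempty) :
    ({x ∈ latBox d m \ S | ∃ y ∈ S, nnAdj y x} ∩ latSphere d m).Nonempty :=
  relative_boundary_meets_sphere_general d m hd C S hCbd hSsub hSbd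
end

section
/- For every ξ ∈ (1/2, 1) there is a constant C(ξ) < ∞ such that for all reals R ≥ 4 and r with C(ξ) ≤ r ≤ R/4, there exist an integer k ≥ 1 and closed subintervals I_1, …, I_k of [0, R], pairwise disjoint and ordered from left to right, such that: k ≤ 1 + R/r; d(I_1, {0}) ∈ [2r^ξ, 7r^ξ]; d(I_k, {R}) ∈ [2r^ξ, 7r^ξ]; d(I_i, I_{i+1}) = 2r^ξ for all 1 ≤ i < k; and |I_i| ∈ [r^ξ, r] for all 1 ≤ i ≤ k. -/
/-!
Take `k = ⌈R / r⌉` intervals of one common length `ℓ`, separated from each other and from both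
endpoints of `[0, R]` by gaps of exactly `2 r^ξ`; this forces `k ℓ + 2 (k + 1) r^ξ = R`. Since
`k ≥ R / r`, `ℓ ≤ r`. Since `ξ < 1`, `r^ξ ≤ 4 r / 25` once `r` is large, and together with
`k ≤ R / r + 1` this gives `ℓ ≥ r^ξ`.
-/

lemma exists_forall_mul_rpow_le_self {ξ : ℝ} (hξ : ξ < 1) (c : ℝ) :
    ∃ C, ∀ r, C ≤ r → 0 < r ∧ c * r ^ ξ ≤ r := by
  refine ⟨max 1 (|c| ^ (1 - ξ)⁻¹), fun r hr => ?_⟩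
  have hr0 : 0 < r := lt_of_lt_of_le one_pos (le_trans (le_max_left _ _) hr)
  have hc : |c| ≤ r ^ (1 - ξ) := by
    calc |c| = (|c| ^ (1 - ξ)⁻¹) ^ (1 - ξ) := by
          rw [← Real.rpow_mul (abs_nonneg c), inv_mul_cancel₀ (sub_ne_zero.mpr hξ.ne'),
            Real.rpow_one]
      _ ≤ r ^ (1 - ξ) :=
          Real.rpow_le_rpow (by positivity) (le_trans (le_max_right _ _) hr) (by linarith)
  refine ⟨hr0, ?_⟩
  calc c * r ^ ξ ≤ r ^ (1 - ξ) * r ^ ξ :=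
        mul_le_mul_of_nonneg_right ((le_abs_self c).trans hc) (by positivity)
    _ = r := by rw [← Real.rpow_add hr0]; norm_num

/-- Left endpoint of the `i`-th of a row of intervals of length `ℓ`, starting at `g` and
separated by gaps `g`. -/
def equalIntervalStart (g ℓ : ℝ) (i : ℕ) : ℝ := g + i * (ℓ + g)

section equalIntervalStart

variable {g ℓ : ℝ}

lemma equalIntervalStart_zero : equalIntervalStart g ℓ 0 = g := by
  simp [equalIntervalStart]

lemma equalIntervalStart_succ_sub (i : ℕ) :
    equalIntervalStart g ℓ (i + 1) - (equalIntervalStart g ℓ i + ℓ) = g := by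
  simp only [equalIntervalStart]; push_cast; ring

lemma equalIntervalStart_nonneg (hg : 0 ≤ g) (hℓ : 0 ≤ ℓ) (i : ℕ) :
    0 ≤ equalIntervalStart g ℓ i := by
  unfold equalIntervalStart; positivity

lemma sub_equalIntervalStart_last {k : ℕ} (hk : 1 ≤ k) :
    k * ℓ + (k + 1) * g - (equalIntervalStart g ℓ (k - 1) + ℓ) = g := by
  simp only [equalIntervalStart, Nat.cast_sub hk]; push_cast; ring

lemma equalIntervalStart_add_le {k i : ℕ} (hg : 0 ≤ g) (hℓ : 0 ≤ ℓ) (hi : i < k) :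
    equalIntervalStart g ℓ i + ℓ ≤ k * ℓ + (k + 1) * g := by
  have hik : (i : ℝ) + 1 ≤ k := by exact_mod_cast hi
  unfold equalIntervalStart
  nlinarith

end equalIntervalStart

lemma exists_count_and_length {R r t : ℝ} (ht : 0 < t) (htr : 25 * t ≤ 4 * r)
    (hrR : 4 * r ≤ R) :
    ∃ k : ℕ, 1 ≤ k ∧ (k : ℝ) ≤ 1 + R / r ∧
      ∃ ℓ, t ≤ ℓ ∧ ℓ ≤ r ∧ R = k * ℓ + (k + 1) * (2 * t) := by
  have hr : 0 < r := by linarith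
  have hRr : 4 ≤ R / r := by rw [le_div_iff₀ hr]; linarith
  set k := ⌈R / r⌉₊
  have hk_ge : R / r ≤ k := Nat.le_ceil _
  have hk_le : (k : ℝ) ≤ 1 + R / r := by
    have := Nat.ceil_lt_add_one (by linarith : 0 ≤ R / r); linarith
  have hk : (0 : ℝ) < k := by linarith
  have hRk : R ≤ r * k := by rwa [div_le_iff₀ hr, mul_comm] at hk_ge
  have hkR : r * k ≤ R + r := by
    have := (le_div_iff₀ hr).mp (by linarith : (k : ℝ) - 1 ≤ R / r); nlinarith
  refine ⟨k, by exact_mod_cast hk, hk_le, (R - (k + 1) * (2 * t)) / k, ?_, ?_, ?_⟩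
  · rw [le_div_iff₀ hk]; nlinarith
  · rw [div_le_iff₀ hk]; nlinarith
  · field_simp; ring

/-- subdivision of `[0, R]` into `k ≤ 1 + R/r` well-separated intervals
`I_i = [a i, b i]` with lengths in `[r^ξ, r]`, consecutive gaps exactly `2r^ξ`, and
boundary gaps in `[2r^ξ, 7r^ξ]`. -/
theorem interval_subdivision (ξ : ℝ) (hξ : ξ ∈ Set.Ioo (1 / 2 : ℝ) 1) :
    ∃ C : ℝ, ∀ R r : ℝ, 4 ≤ R → C ≤ r → r ≤ R / 4 →
      ∃ (k : ℕ) (a b : ℕ → ℝ), 1 ≤ k ∧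
        (∀ i < k, 0 ≤ a i ∧ a i ≤ b i ∧ b i ≤ R) ∧
        (∀ i, i + 1 < k → b i < a (i + 1)) ∧
        (k : ℝ) ≤ 1 + R / r ∧
        a 0 ∈ Set.Icc (2 * r ^ ξ) (7 * r ^ ξ) ∧
        R - b (k - 1) ∈ Set.Icc (2 * r ^ ξ) (7 * r ^ ξ) ∧
        (∀ i, i + 1 < k → a (i + 1) - b i = 2 * r ^ ξ) ∧
        (∀ i < k, b i - a i ∈ Set.Icc (r ^ ξ) r) := by
  obtain ⟨C, hC⟩ := exists_forall_mul_rpow_le_self hξ.2 (25 / 4)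
  refine ⟨C, fun R r _ hCr hrR => ?_⟩
  obtain ⟨hr, htr⟩ := hC r hCr
  have ht : 0 < r ^ ξ := Real.rpow_pos_of_pos hr ξ
  obtain ⟨k, hk, hkR, ℓ, htℓ, hℓr, hR⟩ :=
    exists_count_and_length (R := R) (r := r) ht (by linarith) (by linarith)
  have hg : 0 ≤ 2 * r ^ ξ := by positivity
  have hℓ : 0 ≤ ℓ := by linarith
  refine ⟨k, equalIntervalStart (2 * r ^ ξ) ℓ, fun i => equalIntervalStart (2 * r ^ ξ) ℓ i + ℓ,
    hk, fun i hi => ?_, fun i _ => ?_, hkR, ?_, ?_, fun i _ => equalIntervalStart_succ_sub i,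
    fun i _ => ?_⟩
  · exact ⟨equalIntervalStart_nonneg hg hℓ i, by linarith,
      hR ▸ equalIntervalStart_add_le hg hℓ hi⟩
  · linarith [equalIntervalStart_succ_sub (g := 2 * r ^ ξ) (ℓ := ℓ) i]
  · rw [equalIntervalStart_zero]; exact ⟨le_rfl, by linarith⟩
  · rw [hR, sub_equalIntervalStart_last hk]; exact ⟨le_rfl, by linarith⟩
  · simpa using ⟨htℓ, hℓr⟩
end

section
/- For every ξ ∈ (1/2, 1) there exist constants C₀(ξ) < ∞ and m(ξ) < ∞ such that for all reals N ≥ 0 and L ≥ s ≥ C₀(ξ) the following holds. There exist an integer J ≥ 2 and finite families 𝕀_1, …, 𝕀_J of closed subintervals of [−L, N + L], the intervals in 𝕀_1 ∪ ⋯ ∪ 𝕀_J having pairwise disjoint interiors and union equal to [−L, N + L], such that: (i) every interval has length at most 2L; (ii) for every 1 ≤ j ≤ J − 1 and every I ∈ 𝕀_j one has |I| ≥ √s/100, and both the distance from I to any other interval of 𝕀_1 ∪ ⋯ ∪ 𝕀_j and the distance from I to the set {−L, N + L} are at least max(2|I|^ξ, s^ξ/2); (iii) every I ∈ 𝕀_J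 has |I| ≤ s; (iv) J ≤ m(ξ)·log log(10L), and the total number of intervals in 𝕀_1 ∪ ⋯ ∪ 𝕀_J is at most (5 + 2N/L)·(log(10L))^{m(ξ)}. -/
/-!
Cut `[-L, N + L]` into fewer than `N / L + 2` blocks of a common length `w ∈ (L, 2L]`; these are the
gaps of level `0`. A gap of length `g n` is split into two end gaps of length
`g (n + 1) = 2 g n ^ ξ` and a middle piece; the middle pieces of level `n` form `𝕀_{n+1}`, and the
splitting stops at the first level `M` with `g M ≤ s`, whose gaps are the holes `𝕀_{M+1}`.
A middle piece `I` of level `n` has length at most `g n`, so `2 |I| ^ ξ ≤ g (n + 1)`, and every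
piece of a later family lies in one of its two end gaps: this is the separation. Writing
`c = log 2 / (1 - ξ)`, one has `log g n - c = ξ ^ n (log w - c)`, so `ξ⁻¹ ^ (M - 1) < log w` and
`M = O(log log L)`; each level at most doubles the number of gaps, so there are at most
`(N / L + 2) 2 ^ (M + 1) ≤ (N / L + 2) (log 10L) ^ m` pieces. Taking `C₀ = exp (4 / (1 - ξ))`
makes `16 x ^ ξ ≤ x` for `x ≥ s`, so each middle piece keeps most of the length of its gap.
-/

open Real Set
open scoped Finset

section GapSplitting

variable (g : ℕ → ℝ) (A₀ : Finset ℝ)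

/-- Left endpoints of the gaps of level `n`, the gap at `a` being `[a, a + g n]`: a gap of level
`n` leaves at its two ends the gaps `[a, a + g (n + 1)]` and `[a + g n - g (n + 1), a + g n]` of
level `n + 1`. -/
noncomputable def gapLefts : ℕ → Finset ℝ
  | 0 => A₀
  | n + 1 => gapLefts n ∪ (gapLefts n).image (· + (g n - g (n + 1)))

/-- The `j`-th family (`j ≥ 1`) consists of the middle pieces `[a + g j, a + g (j - 1) - g j]` left
over when the gaps of level `j - 1` are split. -/
noncomputable def splitFamily (j : ℕ) : Finset (ℝ × ℝ) :=
  (gapLefts g A₀ (j - 1)).image fun a => (a + g j, a + g (j - 1) - g j)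

theorem card_gapLefts_le (n : ℕ) : #(gapLefts g A₀ n) ≤ #A₀ * 2 ^ n := by
  induction n with
  | zero => simp [gapLefts]
  | succ n ih =>
    have h_union := Finset.card_union_le (gapLefts g A₀ n)
      ((gapLefts g A₀ n).image (· + (g n - g (n + 1))))
    have h_image := Finset.card_image_le (s := gapLefts g A₀ n) (f := (· + (g n - g (n + 1))))
    rw [pow_succ]
    exact h_union.trans (by linarith)

theorem sum_card_splitFamily_le (J : ℕ) :
    ∑ j ∈ Finset.Icc 1 J, (#(splitFamily g A₀ j) : ℝ) ≤ #A₀ * 2 ^ J := by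
  induction J with
  | zero => simp
  | succ J ih =>
    have hJ : (#(splitFamily g A₀ (J + 1)) : ℝ) ≤ #A₀ * 2 ^ J := by
      exact_mod_cast Finset.card_image_le.trans (card_gapLefts_le g A₀ J)
    rw [Finset.sum_Icc_succ_top (by omega), pow_succ]
    linarith

theorem mem_splitFamily_succ {n : ℕ} {a : ℝ} (ha : a ∈ gapLefts g A₀ n) :
    (a + g (n + 1), a + g n - g (n + 1)) ∈ splitFamily g A₀ (n + 1) :=
  Finset.mem_image_of_mem _ ha

variable {g A₀}

theorem exists_eq_of_mem_splitFamily {j : ℕ} (hj : 1 ≤ j) {p : ℝ × ℝ}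
    (hp : p ∈ splitFamily g A₀ j) :
    ∃ n, j = n + 1 ∧ ∃ a ∈ gapLefts g A₀ n, p = (a + g (n + 1), a + g n - g (n + 1)) := by
  obtain ⟨a, ha, rfl⟩ := Finset.mem_image.1 hp
  obtain ⟨n, rfl⟩ : ∃ n, j = n + 1 := ⟨j - 1, by omega⟩
  exact ⟨n, rfl, a, ha, rfl⟩

theorem exists_parent_of_mem_gapLefts_succ {n : ℕ} (hg : g (n + 1) ≤ g n) {a : ℝ}
    (ha : a ∈ gapLefts g A₀ (n + 1)) :
    ∃ b ∈ gapLefts g A₀ n,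
      b ≤ a ∧ a + g (n + 1) ≤ b + g n ∧ (a = b ∨ a = b + (g n - g (n + 1))) := by
  rcases Finset.mem_union.1 ha with ha | ha
  · exact ⟨a, ha, le_rfl, by linarith, Or.inl rfl⟩
  · obtain ⟨b, hb, rfl⟩ := Finset.mem_image.1 ha
    exact ⟨b, hb, by linarith, by linarith, Or.inr rfl⟩

variable {J : ℕ}

theorem exists_root_of_mem_gapLefts (hg₀ : ∀ n, 0 ≤ g n) (hg : ∀ n < J, 2 * g (n + 1) ≤ g n)
    {n : ℕ} (hn : n ≤ J) {a : ℝ} (ha : a ∈ gapLefts g A₀ n) :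
    ∃ b ∈ A₀, b ≤ a ∧ a + g n ≤ b + g 0 := by
  induction n generalizing a with
  | zero => exact ⟨a, ha, le_rfl, le_rfl⟩
  | succ n ih =>
    obtain ⟨b, hb, hba, hab, -⟩ :=
      exists_parent_of_mem_gapLefts_succ (by linarith [hg n hn, hg₀ (n + 1)]) ha
    obtain ⟨r, hr, hrb, hbr⟩ := ih (by omega) hb
    exact ⟨r, hr, hrb.trans hba, hab.trans hbr⟩

theorem pairwise_gapLefts (hg₀ : ∀ n, 0 ≤ g n) (hg : ∀ n < J, 2 * g (n + 1) ≤ g n)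
    (hA₀ : (A₀ : Set ℝ).Pairwise fun a b => a + g 0 ≤ b ∨ b + g 0 ≤ a)
    {n : ℕ} (hn : n ≤ J) :
    (gapLefts g A₀ n : Set ℝ).Pairwise fun a b => a + g n ≤ b ∨ b + g n ≤ a := by
  induction n with
  | zero => exact hA₀
  | succ n ih =>
    intro a ha a' ha' hne
    have h2 := hg n hn
    have h0 := hg₀ (n + 1)
    obtain ⟨b, hb, hba, hab, hb_or⟩ := exists_parent_of_mem_gapLefts_succ (by linarith) ha
    obtain ⟨b', hb', hba', hab', hb'_or⟩ := exists_parent_of_mem_gapLefts_succ (by linarith) ha'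
    by_cases hbb : b = b'
    · subst hbb
      rcases hb_or with rfl | rfl <;> rcases hb'_or with rfl | rfl <;>
        first | exact absurd rfl hne | (left; linarith) | (right; linarith)
    · rcases ih (by omega) hb hb' hbb with h | h
      · left; linarith
      · right; linarith

/-- A gap of level `n` does not meet the open middle piece of a gap of a lower level `m`. -/
theorem gapLefts_avoid_middle (hg₀ : ∀ n, 0 ≤ g n) (hg : ∀ n < J, 2 * g (n + 1) ≤ g n)
    (hA₀ : (A₀ : Set ℝ).Pairwise fun a b => a + g 0 ≤ b ∨ b + g 0 ≤ a)
    {m n : ℕ} (hmn : m < n) (hn : n ≤ J) {a a' : ℝ} (ha : a ∈ gapLefts g A₀ n)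
    (ha' : a' ∈ gapLefts g A₀ m) :
    a' + g m - g (m + 1) ≤ a ∨ a + g n ≤ a' + g (m + 1) := by
  induction n, hmn using Nat.le_induction generalizing a with
  | base =>
    have h2 := hg m hn
    have h0 := hg₀ (m + 1)
    obtain ⟨b, hb, hba, hab, hb_or⟩ := exists_parent_of_mem_gapLefts_succ (by linarith) ha
    by_cases hbb : b = a'
    · subst hbb
      rcases hb_or with rfl | rfl
      · right; linarith
      · left; linarith
    · rcases pairwise_gapLefts hg₀ hg hA₀ (by omega) hb ha' hbb with h | h
      · right; linarith
      · left; linarith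
  | succ n hmn ih =>
    obtain ⟨b, hb, hba, hab, -⟩ :=
      exists_parent_of_mem_gapLefts_succ (by linarith [hg n hn, hg₀ (n + 1)]) ha
    rcases ih (by omega) hb with h | h
    · left; linarith
    · right; linarith

theorem exists_root_of_mem_splitFamily (hg₀ : ∀ n, 0 ≤ g n)
    (hg : ∀ n < J, 2 * g (n + 1) ≤ g n) {j : ℕ} (hj : j ∈ Finset.Icc 1 J) {p : ℝ × ℝ}
    (hp : p ∈ splitFamily g A₀ j) :
    ∃ b ∈ A₀, b + g j ≤ p.1 ∧ p.1 ≤ p.2 ∧ p.2 + g j ≤ b + g 0 := by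
  obtain ⟨hj1, hjJ⟩ := Finset.mem_Icc.1 hj
  obtain ⟨n, rfl, a, ha, rfl⟩ := exists_eq_of_mem_splitFamily hj1 hp
  obtain ⟨b, hb, hba, hab⟩ := exists_root_of_mem_gapLefts hg₀ hg (by omega) ha
  have := hg n (by omega)
  exact ⟨b, hb, by dsimp only; linarith, by dsimp only; linarith, by dsimp only; linarith⟩

theorem le_separation_of_mem_splitFamily (hg₀ : ∀ n, 0 ≤ g n) (hg : ∀ n < J, 2 * g (n + 1) ≤ g n)
    (hA₀ : (A₀ : Set ℝ).Pairwise fun a b => a + g 0 ≤ b ∨ b + g 0 ≤ a) {j j' : ℕ} (hjJ : j ≤ J)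
    (hj' : j' ∈ Finset.Icc 1 j) {p p' : ℝ × ℝ} (hp : p ∈ splitFamily g A₀ j)
    (hp' : p' ∈ splitFamily g A₀ j') (hne : (j', p') ≠ (j, p)) :
    g j ≤ max (p'.1 - p.2) (p.1 - p'.2) := by
  obtain ⟨hj'1, hj'j⟩ := Finset.mem_Icc.1 hj'
  obtain ⟨n, rfl, a, ha, rfl⟩ := exists_eq_of_mem_splitFamily (hj'1.trans hj'j) hp
  obtain ⟨m, rfl, a', ha', rfl⟩ := exists_eq_of_mem_splitFamily hj'1 hp'
  have := hg m (by omega)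
  have := hg₀ (n + 1)
  dsimp only
  rcases (Nat.lt_succ_iff.1 hj'j).lt_or_eq with hmn | rfl
  · rcases gapLefts_avoid_middle hg₀ hg hA₀ hmn (by omega) ha ha' with h | h
    · exact le_max_of_le_right (by linarith)
    · exact le_max_of_le_left (by linarith)
  · have haa : a ≠ a' := by rintro rfl; exact hne rfl
    rcases pairwise_gapLefts hg₀ hg hA₀ (by omega) ha ha' haa with h | h
    · exact le_max_of_le_left (by linarith)
    · exact le_max_of_le_right (by linarith)

theorem Ioo_inter_Ioo_eq_empty_of_mem_splitFamily (hg₀ : ∀ n, 0 ≤ g n)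
    (hg : ∀ n < J, 2 * g (n + 1) ≤ g n)
    (hA₀ : (A₀ : Set ℝ).Pairwise fun a b => a + g 0 ≤ b ∨ b + g 0 ≤ a) {j j' : ℕ}
    (hj : j ∈ Finset.Icc 1 J) (hj' : j' ∈ Finset.Icc 1 J) {p p' : ℝ × ℝ}
    (hp : p ∈ splitFamily g A₀ j) (hp' : p' ∈ splitFamily g A₀ j') (hne : (j, p) ≠ (j', p')) :
    Ioo p.1 p.2 ∩ Ioo p'.1 p'.2 = ∅ := by
  wlog hjj : j' ≤ j generalizing j j' p p'
  · rw [Set.inter_comm]; exact this hj' hj hp' hp hne.symm (by omega)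
  have hsep := le_separation_of_mem_splitFamily hg₀ hg hA₀ (Finset.mem_Icc.1 hj).2
    (Finset.mem_Icc.2 ⟨(Finset.mem_Icc.1 hj').1, hjj⟩) hp hp' hne.symm
  rw [Ioo_inter_Ioo, Set.Ioo_eq_empty]
  rcases le_max_iff.1 ((hg₀ j).trans hsep) with h | h
  · exact fun hlt => by linarith [le_max_right p.1 p'.1, min_le_left p.2 p'.2]
  · exact fun hlt => by linarith [le_max_left p.1 p'.1, min_le_right p.2 p'.2]

theorem sub_eq_of_mem_splitFamily {j : ℕ} {p : ℝ × ℝ} (hp : p ∈ splitFamily g A₀ j) :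
    p.2 - p.1 = g (j - 1) - 2 * g j := by
  obtain ⟨a, -, rfl⟩ := Finset.mem_image.1 hp
  ring

variable (g) in
theorem mem_gap_or_splitFamily {b x : ℝ} (hb : b ∈ A₀) (hx : x ∈ Icc b (b + g 0)) (n : ℕ) :
    (∃ a ∈ gapLefts g A₀ n, x ∈ Icc a (a + g n)) ∨
      ∃ j ∈ Finset.Icc 1 n, ∃ p ∈ splitFamily g A₀ j, x ∈ Icc p.1 p.2 := by
  induction n with
  | zero => exact Or.inl ⟨b, hb, hx⟩
  | succ n ih =>
    rcases ih with ⟨a, ha, hxa⟩ | ⟨j, hj, p, hp, hxp⟩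
    · by_cases h₁ : x ≤ a + g (n + 1)
      · exact Or.inl ⟨a, Finset.mem_union_left _ ha, hxa.1, h₁⟩
      by_cases h₂ : a + g n - g (n + 1) ≤ x
      · refine Or.inl ⟨a + (g n - g (n + 1)),
          Finset.mem_union_right _ (Finset.mem_image_of_mem _ ha), ?_, ?_⟩ <;> linarith [hxa.2]
      · exact Or.inr ⟨n + 1, by simp, _, mem_splitFamily_succ g A₀ ha, by
          constructor <;> dsimp only <;> linarith⟩
    · exact Or.inr ⟨j, by simp at hj ⊢; omega, p, hp, hxp⟩

theorem biUnion_splitFamily (hg₀ : ∀ n, 0 ≤ g n) (hg : ∀ n < J, 2 * g (n + 1) ≤ g n)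
    (hJ : 1 ≤ J) (hgJ : g J = 0) :
    (⋃ j ∈ Finset.Icc 1 J, ⋃ p ∈ splitFamily g A₀ j, Icc p.1 p.2) = ⋃ b ∈ A₀, Icc b (b + g 0) := by
  apply Set.Subset.antisymm
  · simp only [iUnion_subset_iff]
    intro j hj p hp x hx
    obtain ⟨b, hb, h₁, -, h₂⟩ := exists_root_of_mem_splitFamily hg₀ hg hj hp
    exact mem_biUnion hb ⟨by linarith [hx.1, hg₀ j], by linarith [hx.2, hg₀ j]⟩
  · simp only [iUnion_subset_iff]
    intro b hb x hx
    simp only [mem_iUnion, exists_prop]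
    rcases mem_gap_or_splitFamily g hb hx (J - 1) with ⟨a, ha, hxa⟩ | ⟨j, hj, p, hp, hxp⟩
    · obtain ⟨n, rfl⟩ : ∃ n, J = n + 1 := ⟨J - 1, by omega⟩
      refine ⟨n + 1, by simp, _, mem_splitFamily_succ g A₀ ha, ?_⟩
      simpa [hgJ] using hxa
    · exact ⟨j, by simp at hj ⊢; omega, p, hp, hxp⟩

theorem bounds_of_mem_splitFamily {x₀ x₁ : ℝ} (hg₀ : ∀ n, 0 ≤ g n)
    (hg : ∀ n < J, 2 * g (n + 1) ≤ g n) (hA₀ : ∀ b ∈ A₀, x₀ ≤ b ∧ b + g 0 ≤ x₁) {j : ℕ}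
    (hj : j ∈ Finset.Icc 1 J) {p : ℝ × ℝ} (hp : p ∈ splitFamily g A₀ j) :
    x₀ + g j ≤ p.1 ∧ p.1 ≤ p.2 ∧ p.2 + g j ≤ x₁ ∧ p.2 - p.1 ≤ g 0 := by
  obtain ⟨b, hb, h₁, h₂, h₃⟩ := exists_root_of_mem_splitFamily hg₀ hg hj hp
  have := hA₀ b hb
  exact ⟨by linarith, h₂, by linarith, by linarith [hg₀ j]⟩

/-- With `g (n + 1) = 2 g n ^ ξ`, the end gaps flanking a middle piece `I` of level `n` are longer
than `2 |I| ^ ξ`, and no later piece enters them. -/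
theorem le_length_and_separation_of_mem_splitFamily {ξ s ℓ x₀ x₁ : ℝ} (hξ : 0 ≤ ξ) (hs : 0 ≤ s)
    (hg₀ : ∀ n, 0 ≤ g n) (hg : ∀ n < J, 2 * g (n + 1) ≤ g n)
    (hA₀ : (A₀ : Set ℝ).Pairwise fun a b => a + g 0 ≤ b ∨ b + g 0 ≤ a)
    (hA₀_sub : ∀ b ∈ A₀, x₀ ≤ b ∧ b + g 0 ≤ x₁)
    (hscale : ∀ n < J - 1, ℓ ≤ g n - 2 * g (n + 1) ∧ s ≤ g n ∧ g (n + 1) = 2 * g n ^ ξ)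
    {j : ℕ} (hj : j ∈ Finset.Icc 1 (J - 1)) {p : ℝ × ℝ} (hp : p ∈ splitFamily g A₀ j) :
    ℓ ≤ p.2 - p.1 ∧
      (∀ j' ∈ Finset.Icc 1 j, ∀ p' ∈ splitFamily g A₀ j', (j', p') ≠ (j, p) →
        max (2 * (p.2 - p.1) ^ ξ) (s ^ ξ / 2) ≤ max (p'.1 - p.2) (p.1 - p'.2)) ∧
      max (2 * (p.2 - p.1) ^ ξ) (s ^ ξ / 2) ≤ min (p.1 - x₀) (x₁ - p.2) := by
  obtain ⟨hj1, hjJ⟩ := Finset.mem_Icc.1 hj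
  obtain ⟨n, rfl⟩ : ∃ n, j = n + 1 := ⟨j - 1, by omega⟩
  obtain ⟨hℓn, hsn, hgn⟩ := hscale n (by omega)
  obtain ⟨h₁, h₂, h₃, -⟩ :=
    bounds_of_mem_splitFamily hg₀ hg hA₀_sub (Finset.mem_Icc.2 ⟨hj1, by omega⟩) hp
  have hℓ : p.2 - p.1 = g n - 2 * g (n + 1) := sub_eq_of_mem_splitFamily hp
  have hsep : max (2 * (p.2 - p.1) ^ ξ) (s ^ ξ / 2) ≤ g (n + 1) := by
    rw [hgn]
    apply max_le
    · gcongr; linarith [hg₀ (n + 1)]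
    · linarith [rpow_le_rpow hs hsn hξ, rpow_nonneg (hg₀ n) ξ]
  exact ⟨hℓ ▸ hℓn, fun j' hj' p' hp' hne =>
      hsep.trans (le_separation_of_mem_splitFamily hg₀ hg hA₀ (by omega) hj' hp hp' hne),
    hsep.trans (le_min (by linarith) (by linarith))⟩

end GapSplitting

section Grid

variable (x₀ w : ℝ) (K : ℕ)

noncomputable def gridLefts : Finset ℝ := (Finset.range K).image fun k : ℕ => x₀ + k * w

variable {x₀ w K}

theorem card_gridLefts_le : #(gridLefts x₀ w K) ≤ K :=
  Finset.card_image_le.trans (Finset.card_range K).le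

theorem bounds_of_mem_gridLefts {b : ℝ} (hw : 0 ≤ w) (hb : b ∈ gridLefts x₀ w K) :
    x₀ ≤ b ∧ b + w ≤ x₀ + K * w := by
  obtain ⟨k, hk, rfl⟩ := Finset.mem_image.1 hb
  have hk : (k : ℝ) + 1 ≤ K := by exact_mod_cast Finset.mem_range.1 hk
  constructor <;> nlinarith [(k.cast_nonneg : (0 : ℝ) ≤ k)]

theorem pairwise_gridLefts (hw : 0 ≤ w) :
    (gridLefts x₀ w K : Set ℝ).Pairwise fun a b => a + w ≤ b ∨ b + w ≤ a := by
  simp only [gridLefts, Finset.coe_image]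
  rintro _ ⟨k, -, rfl⟩ _ ⟨k', -, rfl⟩ hne
  rcases lt_or_gt_of_ne (show k ≠ k' by rintro rfl; exact hne rfl) with h | h
  · have : (k : ℝ) + 1 ≤ k' := by exact_mod_cast h
    left; nlinarith
  · have : (k' : ℝ) + 1 ≤ k := by exact_mod_cast h
    right; nlinarith

theorem biUnion_gridLefts (hw : 0 ≤ w) (hK : 1 ≤ K) :
    (⋃ b ∈ gridLefts x₀ w K, Icc b (b + w)) = Icc x₀ (x₀ + K * w) := by
  induction K, hK using Nat.le_induction with
  | base => simp [gridLefts]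
  | succ K hK ih =>
    rw [gridLefts, Finset.range_add_one, Finset.image_insert, Finset.set_biUnion_insert,
      ← gridLefts, ih, union_comm, Icc_union_Icc_eq_Icc (by nlinarith) (by nlinarith)]
    push_cast; ring_nf

end Grid

theorem exists_block_length {N L : ℝ} (hN : 0 ≤ N) (hL : 0 < L) :
    ∃ (K : ℕ) (w : ℝ), 1 ≤ K ∧ -L + K * w = N + L ∧ L < w ∧ w ≤ 2 * L ∧
      (K : ℝ) < N / (2 * L) + 2 := by
  set T := N + 2 * L
  set K := ⌈T / (2 * L)⌉₊
  have hK : 0 < K := Nat.ceil_pos.2 (by positivity)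
  have hK₀ : (0 : ℝ) < K := by exact_mod_cast hK
  have hK_ge : T / (2 * L) ≤ K := Nat.le_ceil _
  have hK_lt : (K : ℝ) < N / (2 * L) + 2 := by
    have : T / (2 * L) = N / (2 * L) + 1 := by field_simp; ring
    linarith [Nat.ceil_lt_add_one (show 0 ≤ T / (2 * L) by positivity)]
  refine ⟨K, T / K, hK, by field_simp; ring, ?_, ?_, hK_lt⟩
  · have : (N / (2 * L) + 2) * L = N / 2 + 2 * L := by field_simp
    rw [lt_div_iff₀ hK₀]
    nlinarith
  · rw [div_le_iff₀ hK₀]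
    rwa [div_le_iff₀ (by positivity), mul_comm] at hK_ge

theorem exists_tiling {N L : ℝ} (hN : 0 ≤ N) (hL : 0 < L) :
    ∃ (A : Finset ℝ) (w : ℝ), L < w ∧ w ≤ 2 * L ∧ (#A : ℝ) < N / L + 2 ∧
      ((A : Set ℝ).Pairwise fun a b => a + w ≤ b ∨ b + w ≤ a) ∧
      (∀ b ∈ A, -L ≤ b ∧ b + w ≤ N + L) ∧ (⋃ b ∈ A, Icc b (b + w)) = Icc (-L) (N + L) := by
  obtain ⟨K, w, hK, hKw, hLw, hw2L, hKN⟩ := exists_block_length hN hL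
  have hw : 0 ≤ w := by linarith
  refine ⟨gridLefts (-L) w K, w, hLw, hw2L, ?_, pairwise_gridLefts hw,
    fun b hb => hKw ▸ bounds_of_mem_gridLefts hw hb, hKw ▸ biUnion_gridLefts hw hK⟩
  have : N / (2 * L) ≤ N / L := div_le_div_of_nonneg_left hN hL (by linarith)
  linarith [(Nat.cast_le (α := ℝ)).2 (card_gridLefts_le (x₀ := -L) (w := w) (K := K))]

theorem sixteen_mul_rpow_le {ξ x : ℝ} (hξ : ξ < 1) (hx : exp (4 / (1 - ξ)) ≤ x) :
    16 * x ^ ξ ≤ x := by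
  have hx₀ : 0 < x := (exp_pos _).trans_le hx
  have h1ξ : 0 < 1 - ξ := by linarith
  have h16 : (16 : ℝ) ≤ x ^ (1 - ξ) :=
    calc (16 : ℝ) = 2 ^ 4 := by norm_num
      _ ≤ exp 1 ^ 4 := by gcongr; linarith [add_one_le_exp (1 : ℝ)]
      _ = exp (4 / (1 - ξ)) ^ (1 - ξ) := by
        rw [← exp_nat_mul, ← exp_mul]; field_simp; norm_num
      _ ≤ x ^ (1 - ξ) := by gcongr
  calc 16 * x ^ ξ ≤ x ^ (1 - ξ) * x ^ ξ := by gcongr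
    _ = x := by rw [← rpow_add hx₀]; simp

theorem iterate_two_mul_rpow_pos {ξ w : ℝ} (hw : 0 < w) (n : ℕ) :
    0 < (fun x : ℝ => 2 * x ^ ξ)^[n] w := by
  induction n with
  | zero => exact hw
  | succ n ih => rw [Function.iterate_succ_apply']; positivity

/-- The iterates are `2 ^ ((1 - ξ ^ n) / (1 - ξ)) * w ^ (ξ ^ n)`, in logarithmic form. -/
theorem log_iterate_two_mul_rpow {ξ w : ℝ} (hξ : ξ ≠ 1) (hw : 0 < w) (n : ℕ) :
    log ((fun x : ℝ => 2 * x ^ ξ)^[n] w) - log 2 / (1 - ξ) =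
      ξ ^ n * (log w - log 2 / (1 - ξ)) := by
  induction n with
  | zero => simp
  | succ n ih =>
    have h1ξ : 1 - ξ ≠ 0 := sub_ne_zero.2 hξ.symm
    rw [Function.iterate_succ_apply', log_mul two_ne_zero
      (rpow_pos_of_pos (iterate_two_mul_rpow_pos hw n) ξ).ne', log_rpow
      (iterate_two_mul_rpow_pos hw n), pow_succ]
    field_simp at ih ⊢
    linear_combination ξ * ih

theorem inv_pow_lt_log_of_lt_iterate {ξ s w : ℝ} (hξ : ξ ∈ Ioo 0 1) (hs₀ : 0 < s)
    (hs : log 2 / (1 - ξ) + 1 ≤ log s) (hw : 0 < w) {n : ℕ}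
    (hn : s < (fun x : ℝ => 2 * x ^ ξ)^[n] w) : ξ⁻¹ ^ n < log w := by
  have hc : 0 ≤ log 2 / (1 - ξ) := div_nonneg (log_nonneg one_le_two) (by linarith [hξ.2])
  have hξn : 0 < ξ ^ n := pow_pos hξ.1 n
  have h := log_lt_log hs₀ hn
  have h_closed := log_iterate_two_mul_rpow hξ.2.ne hw n
  rw [inv_pow, inv_lt_iff_one_lt_mul₀ hξn]
  nlinarith [mul_nonneg hξn.le hc]

theorem exists_scales {ξ s w : ℝ} (hξ : ξ ∈ Ioo 0 1) (hs : exp (4 / (1 - ξ)) ≤ s) (hsw : s < w) :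
    ∃ (M : ℕ) (g : ℕ → ℝ), 1 ≤ M ∧ g 0 = w ∧ g (M + 1) = 0 ∧ (∀ n, 0 ≤ g n) ∧
      (∀ n < M + 1, 2 * g (n + 1) ≤ g n) ∧ g M ≤ s ∧
      (∀ n < M, √s / 100 ≤ g n - 2 * g (n + 1) ∧ s ≤ g n ∧ g (n + 1) = 2 * g n ^ ξ) ∧
      ξ⁻¹ ^ (M - 1) < log w := by
  obtain ⟨hξ₀, hξ₁⟩ := hξ
  set f := fun x : ℝ => 2 * x ^ ξ
  have hs₀ : 0 < s := (exp_pos _).trans_le hs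
  have hw : 0 < w := hs₀.trans hsw
  have hlog_s : log 2 / (1 - ξ) + 1 ≤ log s := by
    have h1ξ : 0 < 1 - ξ := by linarith
    calc log 2 / (1 - ξ) + 1 = (log 2 + (1 - ξ)) / (1 - ξ) := by field_simp
      _ ≤ 4 / (1 - ξ) := by gcongr; linarith [log_two_lt_d9]
      _ ≤ log s := (le_log_iff_exp_le hs₀).2 hs
  have hstop : ∃ n, f^[n] w ≤ s := by
    obtain ⟨n, hn⟩ := pow_unbounded_of_one_lt (log w) ((one_lt_inv₀ hξ₀).2 hξ₁)
    exact ⟨n, not_lt.1 fun h => hn.not_gt (inv_pow_lt_log_of_lt_iterate ⟨hξ₀, hξ₁⟩ hs₀ hlog_s hw h)⟩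
  classical
  set M := Nat.find hstop
  have hs_lt : ∀ n < M, s < f^[n] w := fun n hn => not_le.1 (Nat.find_min hstop hn)
  have hM : 1 ≤ M := (Nat.find_pos hstop).2 (by simpa using hsw)
  set g : ℕ → ℝ := fun n => if n ≤ M then f^[n] w else 0
  have hg_lt : ∀ n < M, s < g n ∧ g (n + 1) = 2 * g n ^ ξ ∧ 16 * g n ^ ξ ≤ g n := by
    intro n hn
    have hgn : g n = f^[n] w := if_pos hn.le
    have hgn' : g (n + 1) = f^[n + 1] w := if_pos hn
    rw [hgn, hgn', Function.iterate_succ_apply']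
    exact ⟨hs_lt n hn, rfl, sixteen_mul_rpow_le hξ₁ (hs.trans (hs_lt n hn).le)⟩
  have hg₀ : ∀ n, 0 ≤ g n := fun n => by
    dsimp only [g]; split_ifs
    · exact (iterate_two_mul_rpow_pos hw n).le
    · exact le_rfl
  refine ⟨M, g, hM, if_pos M.zero_le, if_neg (by omega), hg₀, fun n hn => ?_,
    ?_, fun n hn => ?_, ?_⟩
  · rcases Nat.lt_succ_iff_lt_or_eq.1 hn with hn | rfl
    · linarith [hg_lt n hn, rpow_nonneg (hg₀ n) ξ]
    · rw [show g (M + 1) = 0 from if_neg (by omega), mul_zero]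
      exact hg₀ M
  · exact (if_pos le_rfl).trans_le (Nat.find_spec hstop)
  · obtain ⟨h₁, h₂, h₃⟩ := hg_lt n hn
    have hs₁ : 1 ≤ s := (one_le_exp (by positivity)).trans hs
    refine ⟨?_, h₁.le, h₂⟩
    linarith [(sqrt_le_left hs₀.le).2 (show s ≤ s ^ 2 by nlinarith)]
  · exact inv_pow_lt_log_of_lt_iterate ⟨hξ₀, hξ₁⟩ hs₀ hlog_s hw (hs_lt _ (by omega))

theorem natCast_le_mul_log_of_inv_pow_le {ξ Y : ℝ} {J : ℕ} (hξ : ξ ∈ Ioo 0 1)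
    (hY : exp 1 ≤ Y) (hJ : 2 ≤ J) (h : ξ⁻¹ ^ (J - 2) ≤ Y) :
    (J : ℝ) ≤ (2 + (log ξ⁻¹)⁻¹) * log Y := by
  have hlog : 0 < log ξ⁻¹ := log_pos ((one_lt_inv₀ hξ.1).2 hξ.2)
  have hX : 1 ≤ log Y := by rwa [le_log_iff_exp_le ((exp_pos 1).trans_le hY)]
  have hJlog : ((J - 2 : ℕ) : ℝ) * log ξ⁻¹ ≤ log Y := by
    rw [← log_pow]
    exact log_le_log (by have := hξ.1; positivity) h
  have hJ' : ((J - 2 : ℕ) : ℝ) = J - 2 := by push_cast [Nat.cast_sub hJ]; ring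
  rw [hJ', ← le_div_iff₀ hlog] at hJlog
  have : log Y / log ξ⁻¹ = (log ξ⁻¹)⁻¹ * log Y := by ring
  linarith

theorem two_pow_le_rpow_of_natCast_le_mul_log {J : ℕ} {m Y : ℝ} (hY : 0 < Y)
    (h : (J : ℝ) ≤ m * log Y) : (2 : ℝ) ^ J ≤ Y ^ m :=
  calc (2 : ℝ) ^ J ≤ exp 1 ^ J := by gcongr; linarith [add_one_le_exp (1 : ℝ)]
    _ = exp J := by rw [← exp_nat_mul, mul_one]
    _ ≤ exp (log Y * m) := by rw [mul_comm]; exact exp_le_exp.2 h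
    _ = Y ^ m := (rpow_def_of_pos hY m).symm

/-- hierarchical partition of `[−L, N+L]` into families of closed intervals
`𝕀_1, …, 𝕀_J` (intervals encoded by their endpoint pairs `p = (p.1, p.2)`), the last
family being the holes, with separation, size and complexity properties. -/
theorem one_dimensional_bridge (ξ : ℝ) (hξ : ξ ∈ Set.Ioo (1 / 2 : ℝ) 1) :
    ∃ C₀ m : ℝ, ∀ N L s : ℝ, 0 ≤ N → C₀ ≤ s → s ≤ L →
      ∃ (J : ℕ) (I : ℕ → Finset (ℝ × ℝ)),
        2 ≤ J ∧
        -- closed subintervals of [−L, N+L]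
        (∀ j ∈ Finset.Icc 1 J, ∀ p ∈ I j, -L ≤ p.1 ∧ p.1 ≤ p.2 ∧ p.2 ≤ N + L) ∧
        -- pairwise disjoint interiors
        (∀ j ∈ Finset.Icc 1 J, ∀ j' ∈ Finset.Icc 1 J, ∀ p ∈ I j, ∀ p' ∈ I j',
          (j, p) ≠ (j', p') → Set.Ioo p.1 p.2 ∩ Set.Ioo p'.1 p'.2 = ∅) ∧
        -- union equal to [−L, N+L]
        (⋃ j ∈ Finset.Icc 1 J, ⋃ p ∈ I j, Set.Icc p.1 p.2) = Set.Icc (-L) (N + L) ∧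
        -- (i) every interval has length at most 2L
        (∀ j ∈ Finset.Icc 1 J, ∀ p ∈ I j, p.2 - p.1 ≤ 2 * L) ∧
        -- (ii) intervals of 𝕀_j, j < J: length ≥ √s/100 and separation
        (∀ j ∈ Finset.Icc 1 (J - 1), ∀ p ∈ I j,
          Real.sqrt s / 100 ≤ p.2 - p.1 ∧
          (∀ j' ∈ Finset.Icc 1 j, ∀ p' ∈ I j', (j', p') ≠ (j, p) →
            max (2 * (p.2 - p.1) ^ ξ) (s ^ ξ / 2) ≤ max (p'.1 - p.2) (p.1 - p'.2)) ∧
          max (2 * (p.2 - p.1) ^ ξ) (s ^ ξ / 2) ≤ min (p.1 + L) (N + L - p.2)) ∧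
        -- (iii) the holes have length at most s
        (∀ p ∈ I J, p.2 - p.1 ≤ s) ∧
        -- (iv) complexity
        (J : ℝ) ≤ m * Real.log (Real.log (10 * L)) ∧
        (∑ j ∈ Finset.Icc 1 J, ((I j).card : ℝ)) ≤
          (5 + 2 * N / L) * Real.log (10 * L) ^ m := by
  have hξ' : ξ ∈ Ioo 0 1 := ⟨by linarith [hξ.1], hξ.2⟩
  refine ⟨exp (4 / (1 - ξ)), 2 + (log ξ⁻¹)⁻¹, fun N L s hN hs hsL => ?_⟩
  have hs₀ : 0 < s := (exp_pos _).trans_le hs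
  have hL : 0 < L := hs₀.trans_le hsL
  have hlogL : 4 ≤ log (10 * L) :=
    calc (4 : ℝ) ≤ 4 / (1 - ξ) := by rw [le_div_iff₀ (by linarith [hξ.2])]; linarith [hξ.1]
      _ ≤ log (10 * L) := (le_log_iff_exp_le (by linarith)).2 (hs.trans (by linarith))
  obtain ⟨A₀, w, hLw, hw2L, hA₀_card, hA₀, hA₀_sub, hA₀_union⟩ := exists_tiling hN hL
  obtain ⟨M, g, hM, rfl, hgM1, hg₀, hg, hgM, hg_lt, hM_log⟩ :=
    exists_scales hξ' hs (hsL.trans_lt hLw)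
  have hJ : ((M + 1 : ℕ) : ℝ) ≤ (2 + (log ξ⁻¹)⁻¹) * log (log (10 * L)) := by
    refine natCast_le_mul_log_of_inv_pow_le hξ' (by linarith [exp_one_lt_d9]) (by omega) ?_
    rw [show M + 1 - 2 = M - 1 by omega]
    exact hM_log.le.trans (log_le_log (by linarith) (by linarith))
  have hbounds := fun j hj p hp => bounds_of_mem_splitFamily hg₀ hg hA₀_sub (j := j) hj (p := p) hp
  refine ⟨M + 1, splitFamily g A₀, by omega, fun j hj p hp => ?_,
    fun j hj j' hj' p hp p' hp' =>
      Ioo_inter_Ioo_eq_empty_of_mem_splitFamily hg₀ hg hA₀ hj hj' hp hp',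
    by rw [biUnion_splitFamily hg₀ hg (by omega) hgM1, hA₀_union], fun j hj p hp => ?_,
    fun j hj p hp => ?_, fun p hp => ?_, hJ, ?_⟩
  · obtain ⟨h₁, h₂, h₃, -⟩ := hbounds j hj p hp
    exact ⟨by linarith [hg₀ j], h₂, by linarith [hg₀ j]⟩
  · linarith [hbounds j hj p hp]
  · simpa only [sub_neg_eq_add] using le_length_and_separation_of_mem_splitFamily hξ'.1.le
      hs₀.le hg₀ hg hA₀ hA₀_sub (fun n hn => hg_lt n (by omega)) hj hp
  · rw [sub_eq_of_mem_splitFamily hp, hgM1]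
    simpa using hgM
  · have hK : (#A₀ : ℝ) ≤ 5 + 2 * N / L := by
      rw [mul_div_assoc]; linarith [div_nonneg hN hL.le]
    calc _ ≤ #A₀ * (2 : ℝ) ^ (M + 1) := sum_card_splitFamily_le _ _ _
      _ ≤ _ := mul_le_mul hK (two_pow_le_rpow_of_natCast_le_mul_log (by linarith) hJ)
          (by positivity) ((Nat.cast_nonneg _).trans hK)
end

section
/- Let K and Γ be positive integers and let S ⊆ {1, …, K} be nonempty. Then for every positive integer t with t ≤ (|S| − K/Γ)/(1 + K/Γ), there exist elements s_1 < s_2 < ⋯ < s_t of S with s_{i+1} − s_i ≤ Γ for all 1 ≤ i < t. -/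
/-!
Cut `{0, …, K}` into the `K / Γ + 1` blocks `{x | x / Γ = b}` of `Γ` consecutive integers. The
bound on `t` gives `(K / Γ + 1) · t ≤ |S|`, so by pigeonhole some block holds `t` elements of `S`,
and any two elements of one block are less than `Γ` apart.
-/

open Finset

theorem Nat.sub_lt_of_div_eq_div {Γ x y : ℕ} (hΓ : 0 < Γ) (hxy : x ≤ y) (h : x / Γ = y / Γ) :
    y - x < Γ := by
  have hx := Nat.div_add_mod x Γ
  have hy := Nat.div_add_mod y Γ
  have hyΓ := Nat.mod_lt y hΓ
  rw [h] at hx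
  omega

theorem Finset.exists_strictMono_enum {α : Type*} [LinearOrder α] [Inhabited α] (s : Finset α)
    {t : ℕ} (ht : t ≤ #s) :
    ∃ f : ℕ → α, (∀ i < t, f i ∈ s) ∧ ∀ i j, i < j → j < t → f i < f j := by
  let f : ℕ → α := fun i => if h : i < #s then s.orderEmbOfFin rfl ⟨i, h⟩ else default
  have hf : ∀ i (h : i < #s), f i = s.orderEmbOfFin rfl ⟨i, h⟩ := fun i h => dif_pos h
  refine ⟨f, fun i hi => ?_, fun i j hij hj => ?_⟩
  · rw [hf i (by omega)]
    exact s.orderEmbOfFin_mem rfl _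
  · rw [hf i (by omega), hf j (by omega)]
    exact (s.orderEmbOfFin rfl).strictMono (Fin.mk_lt_mk.mpr hij)

theorem div_add_one_mul_le_of_le_sub_div {t n K Γ : ℕ}
    (h : (t : ℝ) ≤ ((n : ℝ) - (K : ℝ) / (Γ : ℝ)) / (1 + (K : ℝ) / (Γ : ℝ))) :
    (K / Γ + 1) * t ≤ n := by
  set r : ℝ := (K : ℝ) / Γ
  have hr : 0 ≤ r := by positivity
  have hrt : (t : ℝ) * (1 + r) ≤ n - r := (le_div_iff₀ (by positivity)).mp h
  have hfloor : ((K / Γ : ℕ) : ℝ) ≤ r := Nat.cast_div_le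
  have : (((K / Γ + 1) * t : ℕ) : ℝ) ≤ n := by
    push_cast
    nlinarith [(Nat.cast_nonneg t : (0 : ℝ) ≤ t)]
  exact_mod_cast this

theorem extract_close_subsequence_general (K Γ : ℕ) (hΓ : 0 < Γ)
    (S : Finset ℕ) (hS : S ⊆ Finset.Icc 1 K)
    (t : ℕ)
    (htle : (t : ℝ) ≤ ((S.card : ℝ) - (K : ℝ) / (Γ : ℝ)) / (1 + (K : ℝ) / (Γ : ℝ))) :
    ∃ f : ℕ → ℕ, (∀ i < t, f i ∈ S) ∧
      (∀ i j, i < j → j < t → f i < f j) ∧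
      (∀ i, i + 1 < t → f (i + 1) - f i ≤ Γ) := by
  have hblock : ∀ x ∈ S, x / Γ ∈ range (K / Γ + 1) := fun x hx =>
    mem_range_succ_iff.mpr (Nat.div_le_div_right (mem_Icc.mp (hS hx)).2)
  obtain ⟨b, -, hb⟩ := exists_le_card_fiber_of_mul_le_card_of_maps_to hblock nonempty_range_add_one
    (by rw [card_range]; exact div_add_one_mul_le_of_le_sub_div htle)
  obtain ⟨f, hfmem, hfmono⟩ := exists_strictMono_enum _ hb
  refine ⟨f, fun i hi => (mem_filter.mp (hfmem i hi)).1, hfmono, fun i hi => ?_⟩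
  have hbi := (mem_filter.mp (hfmem i (by omega))).2
  have hbi1 := (mem_filter.mp (hfmem (i + 1) hi)).2
  exact (Nat.sub_lt_of_div_eq_div hΓ (hfmono i (i + 1) i.lt_succ_self hi).le
    (hbi.trans hbi1.symm)).le

/-- from any subset `S` of `{1, …, K}`, one can extract `t` increasing
elements with consecutive gaps at most `Γ`, provided `t ≤ (|S| − K/Γ)/(1 + K/Γ)`. -/
theorem extract_close_subsequence (K Γ : ℕ) (hK : 0 < K) (hΓ : 0 < Γ)
    (S : Finset ℕ) (hS : S ⊆ Finset.Icc 1 K) (hSne : S.Nonempty)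
    (t : ℕ) (ht : 0 < t)
    (htle : (t : ℝ) ≤ ((S.card : ℝ) - (K : ℝ) / (Γ : ℝ)) / (1 + (K : ℝ) / (Γ : ℝ))) :
    ∃ f : ℕ → ℕ, (∀ i < t, f i ∈ S) ∧
      (∀ i j, i < j → j < t → f i < f j) ∧
      (∀ i, i + 1 < t → f (i + 1) - f i ≤ Γ) :=
  extract_close_subsequence_general K Γ hΓ S hS t htle
end

section
/- Let d ≥ 1, let X ⊆ ℤ^d be a finite nonempty set, let Q > 0 be real, and let (n_x)_{x ∈ X} be nonnegative reals with Σ_{x ∈ X} n_x ≥ Q. Then at least one of the following holds: (a) there exist x, y ∈ X with |x − y|_∞ ≥ 2, n_x ≥ Q/(2|X|) and n_y ≥ Q/(2|X|); or (b) there exists x ∈ X with n_x ≥ Q·2^{−(2d+1)}. -/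
/-!
Call a site heavy if it carries weight at least `Q/(2|X|)`. The light sites carry at most
`|X| · Q/(2|X|) = Q/2` in total, so the heavy ones carry at least `Q/2`. If two heavy sites are
at `ℓ∞`-distance at least 2 we are in case (a). Otherwise all heavy sites lie in the `3^d`-point
box around any one of them, so one of them carries at least `Q/(2·3^d) ≥ Q·2^{-(2d+1)}`.
-/

open Finset

section Pigeonhole

variable {ι : Type*} {s : Finset ι} {f : ι → ℝ} {a : ℝ}

lemma sum_filter_lt_div_two_card_le_half (ha : 0 ≤ a) :
    ∑ x ∈ s with f x < a / (2 * #s), f x ≤ a / 2 := by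
  calc ∑ x ∈ s with f x < a / (2 * #s), f x
      ≤ #{x ∈ s | f x < a / (2 * #s)} • (a / (2 * #s)) :=
        sum_le_card_nsmul _ _ _ fun x hx => (mem_filter.1 hx).2.le
    _ ≤ #s * (a / (2 * #s)) := by
        rw [nsmul_eq_mul]
        gcongr
        exact filter_subset _ s
    _ = a / 2 * (#s / #s) := by ring
    _ ≤ a / 2 := mul_le_of_le_one_right (by positivity) (div_self_le_one _)

lemma half_le_sum_filter_div_two_card_le (ha : 0 ≤ a) (hsum : a ≤ ∑ x ∈ s, f x) :
    a / 2 ≤ ∑ x ∈ s with a / (2 * #s) ≤ f x, f x := by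
  have hlight := sum_filter_lt_div_two_card_le_half (s := s) (f := f) ha
  rw [← sum_filter_add_sum_filter_not s fun x => a / (2 * #s) ≤ f x] at hsum
  simp only [not_le] at hsum
  linarith

lemma exists_div_le_of_le_sum_of_card_le {N : ℕ} (ha : 0 < a) (hsum : a ≤ ∑ x ∈ s, f x)
    (hcard : #s ≤ N) : ∃ x ∈ s, a / N ≤ f x := by
  have hs : s.Nonempty := nonempty_of_sum_ne_zero (f := f) (by linarith)
  have hN : (0 : ℝ) < N := by exact_mod_cast hs.card_pos.trans_le hcard
  refine exists_le_of_sum_le hs ?_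
  calc ∑ _ ∈ s, a / N = #s * (a / N) := by rw [sum_const, nsmul_eq_mul]
    _ ≤ N * (a / N) := by gcongr
    _ = a := mul_div_cancel₀ _ hN.ne'
    _ ≤ ∑ x ∈ s, f x := hsum

end Pigeonhole

lemma card_le_three_pow_of_forall_abs_sub_lt_two {ι : Type*} [Fintype ι] [DecidableEq ι]
    {s : Finset (ι → ℤ)} (hs : ∀ x ∈ s, ∀ y ∈ s, ∀ i, |x i - y i| < 2) :
    #s ≤ 3 ^ Fintype.card ι := by
  obtain rfl | ⟨x₀, hx₀⟩ := s.eq_empty_or_nonempty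
  · simp
  have hbox : s ⊆ Fintype.piFinset fun i => Icc (x₀ i - 1) (x₀ i + 1) := by
    intro y hy
    simp only [Fintype.mem_piFinset, mem_Icc]
    intro i
    have := abs_lt.1 (hs x₀ hx₀ y hy i)
    omega
  calc #s ≤ #(Fintype.piFinset fun i => Icc (x₀ i - 1) (x₀ i + 1)) := card_le_card hbox
    _ = 3 ^ Fintype.card ι := by
        rw [Fintype.card_piFinset]
        simp [Int.card_Icc, show ∀ z : ℤ, (z + 1 + 1 - (z - 1)).toNat = 3 by omega]

lemma mul_two_zpow_neg_le_div_two_mul_three_pow {Q : ℝ} (hQ : 0 ≤ Q) (d : ℕ) :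
    Q * (2 : ℝ) ^ (-(2 * (d : ℤ) + 1)) ≤ Q / (2 * 3 ^ d) := by
  have h : (2 : ℝ) ^ (-(2 * (d : ℤ) + 1)) = (2 * 4 ^ d)⁻¹ := by
    rw [show -(2 * (d : ℤ) + 1) = -((2 * d + 1 : ℕ) : ℤ) by push_cast; ring, zpow_neg,
      zpow_natCast, pow_succ, pow_mul]
    norm_num [mul_comm]
  rw [h, ← div_eq_mul_inv]
  gcongr
  norm_num

theorem two_heavy_points_or_one_very_heavy_general (d : ℕ)
    (X : Finset (Fin d → ℤ)) (Q : ℝ) (hQ : 0 < Q)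
    (n : (Fin d → ℤ) → ℝ) (hsum : Q ≤ ∑ x ∈ X, n x) :
    (∃ x ∈ X, ∃ y ∈ X, (∃ i, 2 ≤ |x i - y i|) ∧
      Q / (2 * X.card) ≤ n x ∧ Q / (2 * X.card) ≤ n y) ∨
    (∃ x ∈ X, Q * (2 : ℝ) ^ (-(2 * (d : ℤ) + 1)) ≤ n x) := by
  set H := X.filter fun x => Q / (2 * #X) ≤ n x
  by_cases hfar : ∃ x ∈ H, ∃ y ∈ H, ∃ i, 2 ≤ |x i - y i|
  · obtain ⟨x, hx, y, hy, hxy⟩ := hfar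
    simp only [H, mem_filter] at hx hy
    exact Or.inl ⟨x, hx.1, y, hy.1, hxy, hx.2, hy.2⟩
  push Not at hfar
  have hheavy : Q / 2 ≤ ∑ x ∈ H, n x := half_le_sum_filter_div_two_card_le hQ.le hsum
  have hcard : #H ≤ 3 ^ d := by
    simpa using card_le_three_pow_of_forall_abs_sub_lt_two hfar
  obtain ⟨x, hx, hnx⟩ := exists_div_le_of_le_sum_of_card_le (half_pos hQ) hheavy hcard
  refine Or.inr ⟨x, (mem_filter.1 hx).1, ?_⟩
  calc Q * (2 : ℝ) ^ (-(2 * (d : ℤ) + 1)) ≤ Q / (2 * 3 ^ d) :=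
        mul_two_zpow_neg_le_div_two_mul_three_pow hQ.le d
    _ = Q / 2 / ((3 ^ d : ℕ) : ℝ) := by push_cast; rw [div_div]
    _ ≤ n x := hnx

/-- if nonnegative weights on a finite set `X ⊆ ℤ^d` sum to at least `Q`,
then either two sites at `ℓ∞`-distance at least 2 both carry weight at least `Q/(2|X|)`,
or some site carries weight at least `Q·2^{−(2d+1)}`. -/
theorem two_heavy_points_or_one_very_heavy (d : ℕ) (hd : 1 ≤ d)
    (X : Finset (Fin d → ℤ)) (hX : X.Nonempty) (Q : ℝ) (hQ : 0 < Q)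
    (n : (Fin d → ℤ) → ℝ) (hn : ∀ x ∈ X, 0 ≤ n x) (hsum : Q ≤ ∑ x ∈ X, n x) :
    (∃ x ∈ X, ∃ y ∈ X, (∃ i, 2 ≤ |x i - y i|) ∧
      Q / (2 * X.card) ≤ n x ∧ Q / (2 * X.card) ≤ n y) ∨
    (∃ x ∈ X, Q * (2 : ℝ) ^ (-(2 * (d : ℤ) + 1)) ≤ n x) :=
  two_heavy_points_or_one_very_heavy_general d X Q hQ n hsum
end

section
/- Let d ≥ 1 and K ≥ 1 be integers, and let z_1, …, z_n ∈ ℤ^d satisfy |z_{i+1} − z_i|_∞ = 1 for all 1 ≤ i < n (i.e. (z_i) is a *-path) and |z_n − z_1|_∞ ≥ 40K. Then there exist indices 1 ≤ i_1 < i_2 < ⋯ < i_K ≤ n such that |z_{i_{k+1}} − z_{i_k}|_∞ ≤ 20 for all 1 ≤ k < K, and |z_{i_k} − z_{i_{k'}}|_∞ ≥ 10 for all k ≠ k'. -/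
/-!
Run a greedy stack along the path: the new point `z (t + 1)` is pushed if it is at distance
`≥ r` from every stacked point, and otherwise the stack is popped down to the most recent
stacked point within distance `< r`. Stacked points stay pairwise `r`-separated and the top of
the stack stays within `r` of the current point, so with steps of size `≤ δ` consecutive stacked
points are within `r + δ` of each other. Chaining from the bottom point `z 0` to the current
point shows that the stack is long once the path has travelled far; as it grows by at most one
per step, at some time it holds exactly `K` points, which, read bottom-up, are the ones sought.
-/

open List

theorem Nat.exists_eq_of_le_of_succ_le_add_one {f : ℕ → ℕ}
    (hstep : ∀ t, f (t + 1) ≤ f t + 1) {K N : ℕ} (h0 : f 0 ≤ K) (hN : K ≤ f N) :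
    ∃ t ≤ N, f t = K := by
  induction N with
  | zero => exact ⟨0, le_rfl, by omega⟩
  | succ N ih =>
    by_cases hK : K ≤ f N
    · obtain ⟨t, ht, hft⟩ := ih hK
      exact ⟨t, by omega, hft⟩
    · exact ⟨N + 1, le_rfl, by have := hstep N; omega⟩

section

variable {X : Type*} [PseudoMetricSpace X]

theorem List.dist_le_mul_length_of_isChain_cons {c : ℝ} {b : X} :
    ∀ {x : X} {l : List X}, (x :: l).IsChain (fun x y => dist x y ≤ c) → b ∈ x :: l →
      dist x b ≤ c * l.length
  | x, [], _, hb => by simp_all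
  | x, y :: l, hchain, hb => by
    rw [isChain_cons_cons] at hchain
    have hc : 0 ≤ c := dist_nonneg.trans hchain.1
    rcases mem_cons.mp hb with rfl | hb
    · simp only [dist_self, length_cons]; positivity
    · calc dist x b ≤ dist x y + dist y b := dist_triangle _ _ _
        _ ≤ c + c * l.length :=
          add_le_add hchain.1 (dist_le_mul_length_of_isChain_cons hchain.2 hb)
        _ = c * (y :: l).length := by simp only [length_cons]; push_cast; ring

variable (r : ℝ) (z : ℕ → X)

noncomputable def spreadStack : ℕ → List ℕ
  | 0 => [0]
  | t + 1 =>
    if ∀ l ∈ spreadStack t, r ≤ dist (z (t + 1)) (z l) then (t + 1) :: spreadStack t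
    else (spreadStack t).dropWhile fun l => r ≤ dist (z (t + 1)) (z l)

variable {r z}

theorem spreadStack_succ_of_forall {t : ℕ}
    (h : ∀ l ∈ spreadStack r z t, r ≤ dist (z (t + 1)) (z l)) :
    spreadStack r z (t + 1) = (t + 1) :: spreadStack r z t := by
  rw [spreadStack, if_pos h]

theorem spreadStack_succ_of_not_forall {t : ℕ}
    (h : ¬ ∀ l ∈ spreadStack r z t, r ≤ dist (z (t + 1)) (z l)) :
    spreadStack r z (t + 1) <:+ spreadStack r z t ∧
      ∃ x l, spreadStack r z (t + 1) = x :: l ∧ dist (z (t + 1)) (z x) < r := by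
  rw [spreadStack, if_neg h]
  refine ⟨dropWhile_suffix _, ?_⟩
  have hne : (spreadStack r z t).dropWhile (fun l => r ≤ dist (z (t + 1)) (z l)) ≠ [] := by
    simpa [dropWhile_eq_nil_iff] using h
  obtain ⟨x, l, hxl⟩ := exists_cons_of_ne_nil hne
  have hx := head?_dropWhile_not (fun l => decide (r ≤ dist (z (t + 1)) (z l)))
    (spreadStack r z t)
  rw [hxl] at hx
  exact ⟨x, l, hxl, by simpa using hx⟩

theorem le_of_mem_spreadStack {t a : ℕ} (ha : a ∈ spreadStack r z t) : a ≤ t := by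
  induction t generalizing a with
  | zero => simp_all [spreadStack]
  | succ t ih =>
    by_cases h : ∀ l ∈ spreadStack r z t, r ≤ dist (z (t + 1)) (z l)
    · rw [spreadStack_succ_of_forall h, mem_cons] at ha
      rcases ha with rfl | ha
      exacts [le_rfl, (ih ha).trans t.le_succ]
    · exact (ih ((spreadStack_succ_of_not_forall h).1.mem ha)).trans t.le_succ

theorem spreadStack_pairwise_gt (t : ℕ) : (spreadStack r z t).Pairwise (· > ·) := by
  induction t with
  | zero => simp [spreadStack]
  | succ t ih =>
    by_cases h : ∀ l ∈ spreadStack r z t, r ≤ dist (z (t + 1)) (z l)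
    · rw [spreadStack_succ_of_forall h, pairwise_cons]
      exact ⟨fun a ha => Nat.lt_succ_of_le (le_of_mem_spreadStack ha), ih⟩
    · exact ih.sublist (spreadStack_succ_of_not_forall h).1.sublist

theorem spreadStack_pairwise_le_dist (t : ℕ) :
    (spreadStack r z t).Pairwise (fun a b => r ≤ dist (z a) (z b)) := by
  induction t with
  | zero => simp [spreadStack]
  | succ t ih =>
    by_cases h : ∀ l ∈ spreadStack r z t, r ≤ dist (z (t + 1)) (z l)
    · rw [spreadStack_succ_of_forall h, pairwise_cons]
      exact ⟨h, ih⟩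
    · exact ih.sublist (spreadStack_succ_of_not_forall h).1.sublist

theorem singleton_zero_suffix_spreadStack (t : ℕ) : [0] <:+ spreadStack r z t := by
  induction t with
  | zero => simp [spreadStack]
  | succ t ih =>
    by_cases h : ∀ l ∈ spreadStack r z t, r ≤ dist (z (t + 1)) (z l)
    · rw [spreadStack_succ_of_forall h]
      exact ih.trans (suffix_cons _ _)
    · obtain ⟨hsuf, x, l, hxl, -⟩ := spreadStack_succ_of_not_forall h
      exact suffix_of_suffix_length_le ih hsuf (by simp [hxl])

theorem length_spreadStack_succ_le (t : ℕ) :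
    (spreadStack r z (t + 1)).length ≤ (spreadStack r z t).length + 1 := by
  by_cases h : ∀ l ∈ spreadStack r z t, r ≤ dist (z (t + 1)) (z l)
  · simp [spreadStack_succ_of_forall h]
  · exact (spreadStack_succ_of_not_forall h).1.length_le.trans (Nat.le_succ _)

theorem exists_spreadStack_eq_cons_dist_lt (hr : 0 < r) (t : ℕ) :
    ∃ x l, spreadStack r z t = x :: l ∧ dist (z t) (z x) < r := by
  cases t with
  | zero => exact ⟨0, [], rfl, by simpa using hr⟩
  | succ t =>
    by_cases h : ∀ l ∈ spreadStack r z t, r ≤ dist (z (t + 1)) (z l)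
    · exact ⟨t + 1, _, spreadStack_succ_of_forall h, by simpa using hr⟩
    · exact (spreadStack_succ_of_not_forall h).2

variable {δ : ℝ}

theorem spreadStack_isChain_dist_lt (hr : 0 < r) {t : ℕ}
    (hstep : ∀ i < t, dist (z (i + 1)) (z i) ≤ δ) :
    (spreadStack r z t).IsChain (fun a b => dist (z a) (z b) < r + δ) := by
  induction t with
  | zero => simp [spreadStack]
  | succ t ih =>
    have ih := ih fun i hi => hstep i (by omega)
    by_cases h : ∀ l ∈ spreadStack r z t, r ≤ dist (z (t + 1)) (z l)
    · obtain ⟨x, l, hxl, hx⟩ := exists_spreadStack_eq_cons_dist_lt (z := z) hr t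
      rw [spreadStack_succ_of_forall h, hxl, isChain_cons_cons]
      refine ⟨?_, hxl ▸ ih⟩
      calc dist (z (t + 1)) (z x)
          ≤ dist (z (t + 1)) (z t) + dist (z t) (z x) := dist_triangle _ _ _
        _ < r + δ := by linarith [hstep t t.lt_succ_self]
    · exact ih.suffix (spreadStack_succ_of_not_forall h).1

theorem dist_lt_mul_length_spreadStack (hr : 0 < r) (hδ : 0 ≤ δ) {t : ℕ}
    (hstep : ∀ i < t, dist (z (i + 1)) (z i) ≤ δ) :
    dist (z t) (z 0) < (r + δ) * (spreadStack r z t).length := by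
  obtain ⟨x, l, hxl, hx⟩ := exists_spreadStack_eq_cons_dist_lt (z := z) hr t
  have hchain : ((x :: l).map z).IsChain (fun p q => dist p q ≤ r + δ) := by
    rw [isChain_map, ← hxl]
    exact (spreadStack_isChain_dist_lt hr hstep).imp fun _ _ h => h.le
  have hzero : z 0 ∈ (x :: l).map z :=
    mem_map_of_mem <| hxl ▸ (singleton_zero_suffix_spreadStack t).subset (mem_singleton_self 0)
  have hx0 := dist_le_mul_length_of_isChain_cons hchain hzero
  rw [length_map] at hx0
  calc dist (z t) (z 0) ≤ dist (z t) (z x) + dist (z x) (z 0) := dist_triangle _ _ _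
    _ < r + (r + δ) * l.length := by linarith
    _ ≤ (r + δ) * (spreadStack r z t).length := by rw [hxl, length_cons]; push_cast; linarith

theorem exists_spread_points_of_le_dist (hr : 0 < r) (hδ : 0 ≤ δ) {N K : ℕ} (hK : 1 ≤ K)
    (hstep : ∀ i < N, dist (z (i + 1)) (z i) ≤ δ)
    (hfar : (r + δ) * (K - 1) ≤ dist (z N) (z 0)) :
    ∃ f : ℕ → ℕ, (∀ k < K, f k ≤ N) ∧ (∀ k l, k < l → l < K → f k < f l) ∧
      (∀ k, k + 1 < K → dist (z (f (k + 1))) (z (f k)) < r + δ) ∧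
      (∀ k l, k < K → l < K → k ≠ l → r ≤ dist (z (f k)) (z (f l))) := by
  have hlenN : K ≤ (spreadStack r z N).length := by
    have hmul := hfar.trans_lt (dist_lt_mul_length_spreadStack hr hδ hstep)
    have : (K : ℝ) - 1 < (spreadStack r z N).length := lt_of_mul_lt_mul_left hmul (by linarith)
    have : (K : ℝ) < (spreadStack r z N).length + 1 := by linarith
    exact Nat.lt_succ_iff.mp (by exact_mod_cast this)
  obtain ⟨T, hTN, hlen⟩ := Nat.exists_eq_of_le_of_succ_le_add_one
    (f := fun t => (spreadStack r z t).length) length_spreadStack_succ_le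
    (by simpa [spreadStack] using hK) hlenN
  have hlt := pairwise_reverse.mpr (spreadStack_pairwise_gt (r := r) (z := z) T)
  have hsep := pairwise_reverse.mpr (spreadStack_pairwise_le_dist (r := r) (z := z) T)
  have hnear := isChain_reverse.mpr
    (spreadStack_isChain_dist_lt (t := T) hr fun i hi => hstep i (by omega))
  have hmem : ∀ a ∈ (spreadStack r z T).reverse, a ≤ N :=
    fun a ha => (le_of_mem_spreadStack (mem_reverse.mp ha)).trans hTN
  have hL : (spreadStack r z T).reverse.length = K := by rw [length_reverse, hlen]
  generalize (spreadStack r z T).reverse = L at hlt hsep hnear hmem hL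
  rw [pairwise_iff_getElem] at hlt hsep
  rw [isChain_iff_getElem] at hnear
  have hget : ∀ k (hk : k < K), L.getD k 0 = L[k] := fun k hk => getD_eq_getElem _ _ (hL ▸ hk)
  refine ⟨fun k => L.getD k 0, fun k hk => ?_, fun k l hkl hl => ?_, fun k hk => ?_,
    fun k l hk hl hkl => ?_⟩ <;> beta_reduce
  · rw [hget k hk]
    exact hmem _ (getElem_mem _)
  · rw [hget k (by omega), hget l hl]
    exact hlt k l _ _ hkl
  · rw [hget k (by omega), hget (k + 1) hk]
    exact hnear k (by omega)
  · rw [hget k hk, hget l hl]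
    rcases Nat.lt_or_gt_of_ne hkl with h | h
    · exact dist_comm (z _) (z _) ▸ hsep k l _ _ h
    · exact hsep l k _ _ h

end

section

variable {ι : Type*} [Fintype ι] {x y : ι → ℤ} {c : ℤ}

theorem intPi_dist_le_iff (hc : 0 ≤ c) : dist x y ≤ c ↔ ∀ j, |x j - y j| ≤ c := by
  rw [dist_pi_le_iff (by exact_mod_cast hc)]
  simp only [Int.dist_eq]
  norm_cast

theorem intPi_le_dist_iff (hc : 0 < c) : c ≤ dist x y ↔ ∃ j, c ≤ |x j - y j| := by
  rw [← not_lt, dist_pi_lt_iff (by exact_mod_cast hc)]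
  simp only [Int.dist_eq, not_forall, not_lt]
  norm_cast

end

theorem select_spread_points_on_star_path_general (d K : ℕ) (hK : 1 ≤ K)
    (n : ℕ) (hn : 1 ≤ n) (z : ℕ → Fin d → ℤ)
    (hstar : ∀ i, i + 1 < n →
      (∀ j, |z (i + 1) j - z i j| ≤ 1) ∧ (∃ j, |z (i + 1) j - z i j| = 1))
    (hfar : ∃ j, (40 * K : ℤ) ≤ |z (n - 1) j - z 0 j|) :
    ∃ f : ℕ → ℕ, (∀ k < K, f k < n) ∧
      (∀ k l, k < l → l < K → f k < f l) ∧
      (∀ k, k + 1 < K → ∀ j, |z (f (k + 1)) j - z (f k) j| ≤ 20) ∧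
      (∀ k l, k < K → l < K → k ≠ l → ∃ j, (10 : ℤ) ≤ |z (f k) j - z (f l) j|) := by
  have hstep : ∀ i < n - 1, dist (z (i + 1)) (z i) ≤ 1 := fun i hi => by
    exact_mod_cast (intPi_dist_le_iff zero_le_one).mpr (hstar i (by omega)).1
  have hends : ((10 : ℝ) + 1) * (K - 1) ≤ dist (z (n - 1)) (z 0) :=
    calc ((10 : ℝ) + 1) * (K - 1) ≤ ((40 * K : ℤ) : ℝ) := by push_cast; linarith
      _ ≤ dist (z (n - 1)) (z 0) := (intPi_le_dist_iff (by omega)).mpr hfar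
  obtain ⟨f, hf_lt, hf_mono, hf_near, hf_far⟩ :=
    exists_spread_points_of_le_dist (by norm_num) zero_le_one hK hstep hends
  refine ⟨f, fun k hk => by have := hf_lt k hk; omega, hf_mono,
    fun k hk => (intPi_dist_le_iff (by norm_num)).mp ?_,
    fun k l hk hl hkl => (intPi_le_dist_iff (by norm_num)).mp ?_⟩
  · exact_mod_cast (hf_near k hk).le.trans (by norm_num)
  · exact_mod_cast hf_far k l hk hl hkl

/-- along a `*`-path whose endpoints are at `ℓ∞`-distance at least `40K`,
one can select `K` points, consecutive ones at `ℓ∞`-distance at most `20` and any two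
distinct ones at `ℓ∞`-distance at least `10`. -/
theorem select_spread_points_on_star_path (d K : ℕ) (hd : 1 ≤ d) (hK : 1 ≤ K)
    (n : ℕ) (hn : 1 ≤ n) (z : ℕ → Fin d → ℤ)
    (hstar : ∀ i, i + 1 < n →
      (∀ j, |z (i + 1) j - z i j| ≤ 1) ∧ (∃ j, |z (i + 1) j - z i j| = 1))
    (hfar : ∃ j, (40 * K : ℤ) ≤ |z (n - 1) j - z 0 j|) :
    ∃ f : ℕ → ℕ, (∀ k < K, f k < n) ∧
      (∀ k l, k < l → l < K → f k < f l) ∧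
      (∀ k, k + 1 < K → ∀ j, |z (f (k + 1)) j - z (f k) j| ≤ 20) ∧
      (∀ k l, k < K → l < K → k ≠ l → ∃ j, (10 : ℤ) ≤ |z (f k) j - z (f l) j|) :=
  select_spread_points_on_star_path_general d K hK n hn z hstar hfar
end
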